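/- Let X be a topological space and (S,*) a semigroup of continuous functions X → X with an involution, and suppose P^{+,*}(X,S) is nonempty. Then P^{+,*}_proj(X,S,ℂ^ℓ) = P^{+,*}(X,S,ℂ^ℓ) holds for some ℓ ≥ 2 if and only if P^{+,*}_proj(X,S,ℂ^m) = P^{+,*}(X,S,ℂ^m) holds for every m with 2 ≤ m ≤ ℓ. -/
import Mathlib


open scoped ComplexOrder

/-- Complex "inner product" on finite tuples, linear in the first argument and
conjugate-linear in the second: `cip v w = ∑ i, v i * conj (w i)`. -/
noncomputable def cip {ι : Type*} [Fintype ι] (v w : ι → ℂ) : ℂ :=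
  ∑ i, v i * (starRingEnd ℂ) (w i)

/-- A matrix valued kernel is positive definite. -/
def IsPDMat {X : Type*} {ℓ : ℕ} (K : X → X → Matrix (Fin ℓ) (Fin ℓ) ℂ) : Prop :=
  ∀ (n : ℕ) (x : Fin n → X), Function.Injective x →
    ∀ v : Fin n → Fin ℓ → ℂ,
      0 ≤ ∑ μ : Fin n, ∑ ν : Fin n, cip ((K (x μ) (x ν)).mulVec (v μ)) (v ν)

/-- A matrix valued kernel is strictly positive definite. -/
def IsSPDMat {X : Type*} {ℓ : ℕ} (K : X → X → Matrix (Fin ℓ) (Fin ℓ) ℂ) : Prop :=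
  ∀ (n : ℕ) (x : Fin n → X), Function.Injective x →
    ∀ v : Fin n → Fin ℓ → ℂ, (∃ μ, v μ ≠ 0) →
      0 < ∑ μ : Fin n, ∑ ν : Fin n, cip ((K (x μ) (x ν)).mulVec (v μ)) (v ν)

/-- A scalar valued kernel is positive definite. -/
def IsPDKer {X : Type*} (k : X → X → ℂ) : Prop :=
  ∀ (n : ℕ) (x : Fin n → X), Function.Injective x →
    ∀ c : Fin n → ℂ,
      0 ≤ ∑ μ : Fin n, ∑ ν : Fin n, c μ * (starRingEnd ℂ) (c ν) * k (x μ) (x ν)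

/-- A scalar valued kernel is strictly positive definite. -/
def IsSPDKer {X : Type*} (k : X → X → ℂ) : Prop :=
  ∀ (n : ℕ) (x : Fin n → X), Function.Injective x →
    ∀ c : Fin n → ℂ, (∃ μ, c μ ≠ 0) →
      0 < ∑ μ : Fin n, ∑ ν : Fin n, c μ * (starRingEnd ℂ) (c ν) * k (x μ) (x ν)

/-- The scalar valued projection `K_v(x,y) = ⟨K(x,y)v, v⟩` of a matrix valued kernel. -/
noncomputable def projKer {X : Type*} {ℓ : ℕ} (K : X → X → Matrix (Fin ℓ) (Fin ℓ) ℂ)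
    (v : Fin ℓ → ℂ) : X → X → ℂ :=
  fun x y => cip ((K x y).mulVec v) v

/-- The class `P^{+,*}(X,S,ℂ^ℓ)` of continuous adjointly invariant strictly positive definite
matrix valued kernels, where `st` is the involution of the semigroup `S`. -/
def PstarPlusMat {X : Type*} [TopologicalSpace X] (S : Set (X → X))
    (st : (X → X) → (X → X)) (ℓ : ℕ) :
    Set (X → X → Matrix (Fin ℓ) (Fin ℓ) ℂ) :=
  {K | (Continuous fun p : X × X => K p.1 p.2) ∧
       (∀ φ ∈ S, ∀ x y : X, K x (φ y) = K (st φ x) y) ∧ IsSPDMat K}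

/-- The class `P^{+,*}_proj(X,S,ℂ^ℓ)` of continuous adjointly invariant matrix valued kernels
all of whose scalar valued projections are strictly positive definite. -/
def PstarPlusProjMat {X : Type*} [TopologicalSpace X] (S : Set (X → X))
    (st : (X → X) → (X → X)) (ℓ : ℕ) :
    Set (X → X → Matrix (Fin ℓ) (Fin ℓ) ℂ) :=
  {K | (Continuous fun p : X × X => K p.1 p.2) ∧
       (∀ φ ∈ S, ∀ x y : X, K x (φ y) = K (st φ x) y) ∧
       ∀ v : Fin ℓ → ℂ, v ≠ 0 → IsSPDKer (projKer K v)}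


section Helpers

open scoped ComplexOrder

lemma cip_smul_left {ι : Type*} [Fintype ι] (c : ℂ) (v w : ι → ℂ) :
    cip (c • v) w = c * cip v w := by
  simp [cip, Finset.mul_sum, mul_assoc]

lemma cip_smul_right {ι : Type*} [Fintype ι] (c : ℂ) (v w : ι → ℂ) :
    cip v (c • w) = (starRingEnd ℂ) c * cip v w := by
  simp [cip, Finset.mul_sum]; ring_nf; simp [mul_comm, mul_left_comm]

lemma spdKer_sum_nonneg {X : Type*} {k : X → X → ℂ} (hk : IsSPDKer k)
    (n : ℕ) (x : Fin n → X) (hx : Function.Injective x) (c : Fin n → ℂ) :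
    0 ≤ ∑ μ : Fin n, ∑ ν : Fin n, c μ * (starRingEnd ℂ) (c ν) * k (x μ) (x ν) := by
  by_cases h : ∃ μ, c μ ≠ 0
  · exact le_of_lt (hk n x hx c h)
  · push_neg at h
    simp [h]

lemma sum_split {m ℓ : ℕ} (hm : m ≤ ℓ) (f : Fin ℓ → ℂ) :
    ∑ i, f i = (∑ i : Fin m, f (Fin.castLE hm i)) +
      ∑ i ∈ Finset.univ.filter (fun i : Fin ℓ => ¬ (i : ℕ) < m), f i := by
  rw [← Finset.sum_filter_add_sum_filter_not Finset.univ (fun i : Fin ℓ => (i : ℕ) < m)]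
  congr 1
  have himg : Finset.univ.filter (fun i : Fin ℓ => (i : ℕ) < m)
      = Finset.univ.image (Fin.castLE hm) := by
    ext j
    simp only [Finset.mem_filter, Finset.mem_univ, true_and, Finset.mem_image]
    constructor
    · intro hj; exact ⟨⟨(j : ℕ), hj⟩, rfl⟩
    · rintro ⟨i, rfl⟩; exact i.2
  rw [himg, Finset.sum_image (fun a _ b _ h => Fin.castLE_injective hm h)]

noncomputable def blockK {X : Type*} {m ℓ : ℕ} (hm : m ≤ ℓ)
    (K : X → X → Matrix (Fin m) (Fin m) ℂ) (k : X → X → ℂ) :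
    X → X → Matrix (Fin ℓ) (Fin ℓ) ℂ :=
  fun x y => Matrix.of fun i j =>
    if hi : (i : ℕ) < m then
      (if hj : (j : ℕ) < m then K x y ⟨i, hi⟩ ⟨j, hj⟩ else 0)
    else
      (if (j : ℕ) < m then 0 else if (i : ℕ) = (j : ℕ) then k x y else 0)

lemma blockK_apply {X : Type*} {m ℓ : ℕ} (hm : m ≤ ℓ)
    (K : X → X → Matrix (Fin m) (Fin m) ℂ) (k : X → X → ℂ) (x y : X) (i j : Fin ℓ) :
    blockK hm K k x y i j =
      if hi : (i : ℕ) < m then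
        (if hj : (j : ℕ) < m then K x y ⟨i, hi⟩ ⟨j, hj⟩ else 0)
      else
        (if (j : ℕ) < m then 0 else if (i : ℕ) = (j : ℕ) then k x y else 0) := rfl

lemma blockK_key {X : Type*} {m ℓ : ℕ} (hm : m ≤ ℓ)
    (K : X → X → Matrix (Fin m) (Fin m) ℂ) (k : X → X → ℂ) (x y : X)
    (v w : Fin ℓ → ℂ) :
    cip ((blockK hm K k x y).mulVec v) w =
      cip ((K x y).mulVec (v ∘ Fin.castLE hm)) (w ∘ Fin.castLE hm) +
      k x y * ∑ i ∈ Finset.univ.filter (fun i : Fin ℓ => ¬ (i : ℕ) < m),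
          v i * (starRingEnd ℂ) (w i) := by
  unfold cip
  rw [sum_split hm (fun i => (blockK hm K k x y).mulVec v i * (starRingEnd ℂ) (w i))]
  congr 1
  · refine Finset.sum_congr rfl fun i _ => ?_
    congr 1
    show ∑ j, blockK hm K k x y (Fin.castLE hm i) j * v j = _
    rw [sum_split hm (fun j => blockK hm K k x y (Fin.castLE hm i) j * v j)]
    have h2 : ∑ j ∈ Finset.univ.filter (fun j : Fin ℓ => ¬ (j : ℕ) < m),
        blockK hm K k x y (Fin.castLE hm i) j * v j = 0 := by
      apply Finset.sum_eq_zero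
      intro j hj
      simp only [Finset.mem_filter] at hj
      simp [blockK_apply, i.2, hj.2]
    rw [h2, add_zero]
    refine Finset.sum_congr rfl fun j _ => ?_
    show blockK hm K k x y (Fin.castLE hm i) (Fin.castLE hm j) * v (Fin.castLE hm j) = _
    simp only [blockK_apply]
    rw [dif_pos (show ((Fin.castLE hm i : Fin ℓ) : ℕ) < m from i.2),
        dif_pos (show ((Fin.castLE hm j : Fin ℓ) : ℕ) < m from j.2)]
    rfl
  · rw [Finset.mul_sum]
    refine Finset.sum_congr rfl fun i hi => ?_
    simp only [Finset.mem_filter, Finset.mem_univ, true_and] at hi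
    have hmv : (blockK hm K k x y).mulVec v i = k x y * v i := by
      show ∑ j, blockK hm K k x y i j * v j = _
      rw [Finset.sum_eq_single i]
      · simp [blockK_apply, hi]
      · intro j _ hji
        simp only [blockK_apply, dif_neg hi]
        by_cases hj : (j : ℕ) < m
        · simp [hj]
        · have hij : ¬ (i : ℕ) = (j : ℕ) := fun h => hji (Fin.ext h.symm)
          simp [hj, hij]
      · intro h; exact absurd (Finset.mem_univ i) h
    rw [hmv]; ring

lemma mat_subset_proj {X : Type*} [TopologicalSpace X] (S : Set (X → X))
    (st : (X → X) → (X → X)) (ℓ : ℕ) :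
    PstarPlusMat S st ℓ ⊆ PstarPlusProjMat S st ℓ := by
  rintro K ⟨hc, hinv, hspd⟩
  refine ⟨hc, hinv, fun v hv n x hx c hc0 => ?_⟩
  obtain ⟨μ0, hμ0⟩ := hc0
  have key := hspd n x hx (fun μ => c μ • v) ⟨μ0, smul_ne_zero hμ0 hv⟩
  refine lt_of_lt_of_eq key (Finset.sum_congr rfl fun μ _ => Finset.sum_congr rfl fun ν _ => ?_)
  rw [Matrix.mulVec_smul, cip_smul_left, cip_smul_right, projKer]
  ring

lemma cip_term_nonneg (z : ℂ) : 0 ≤ z * (starRingEnd ℂ) z := by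
  rw [Complex.mul_conj]; exact_mod_cast Complex.normSq_nonneg _

lemma cip_term_pos {z : ℂ} (hz : z ≠ 0) : 0 < z * (starRingEnd ℂ) z := by
  rw [Complex.mul_conj]; exact_mod_cast Complex.normSq_pos.2 hz

lemma blockK_proj_spd {X : Type*} {m ℓ : ℕ} (hm : m ≤ ℓ)
    (K : X → X → Matrix (Fin m) (Fin m) ℂ) (k : X → X → ℂ)
    (hkspd : IsSPDKer k)
    (hKproj : ∀ v : Fin m → ℂ, v ≠ 0 → IsSPDKer (projKer K v))
    (v : Fin ℓ → ℂ) (hv : v ≠ 0) :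
    IsSPDKer (projKer (blockK hm K k) v) := by
  intro n x hx c hc0
  set v1 : Fin m → ℂ := v ∘ Fin.castLE hm with hv1def
  set T : ℂ := ∑ i ∈ Finset.univ.filter (fun i : Fin ℓ => ¬ (i : ℕ) < m),
      v i * (starRingEnd ℂ) (v i) with hTdef
  have hproj : ∀ a b : X, projKer (blockK hm K k) v a b = projKer K v1 a b + k a b * T := by
    intro a b
    exact blockK_key hm K k a b v v
  have hsplit : (∑ μ : Fin n, ∑ ν : Fin n,
        c μ * (starRingEnd ℂ) (c ν) * projKer (blockK hm K k) v (x μ) (x ν))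
      = (∑ μ : Fin n, ∑ ν : Fin n, c μ * (starRingEnd ℂ) (c ν) * projKer K v1 (x μ) (x ν))
        + T * (∑ μ : Fin n, ∑ ν : Fin n, c μ * (starRingEnd ℂ) (c ν) * k (x μ) (x ν)) := by
    simp only [hproj, mul_add, Finset.sum_add_distrib]
    congr 1
    rw [Finset.mul_sum]
    refine Finset.sum_congr rfl fun μ _ => ?_
    rw [Finset.mul_sum]
    exact Finset.sum_congr rfl fun ν _ => by ring
  rw [hsplit]
  have hT_nonneg : 0 ≤ T :=
    Finset.sum_nonneg fun i _ => cip_term_nonneg (v i)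
  by_cases hv1z : v1 = 0
  · -- all mass in tail: T > 0
    have hS1 : (∑ μ : Fin n, ∑ ν : Fin n,
        c μ * (starRingEnd ℂ) (c ν) * projKer K v1 (x μ) (x ν)) = 0 := by
      simp [hv1z, projKer, cip, Matrix.mulVec, dotProduct]
    have hTpos : 0 < T := by
      obtain ⟨i, hi⟩ : ∃ i, v i ≠ 0 := by
        by_contra h; push_neg at h; exact hv (funext h)
      have him : ¬ (i : ℕ) < m := by
        intro hlt
        have : v1 ⟨(i : ℕ), hlt⟩ = 0 := by rw [hv1z]; rfl
        have : v i = 0 := by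
          simpa [hv1def, Fin.castLE, Fin.ext_iff] using this
        exact hi this
      refine Finset.sum_pos' (fun j _ => cip_term_nonneg (v j)) ?_
      exact ⟨i, by simp only [Finset.mem_filter, Finset.mem_univ, true_and]; exact him, cip_term_pos hi⟩
    rw [hS1, zero_add]
    exact mul_pos hTpos (hkspd n x hx c hc0)
  · -- head part strictly positive
    have h1 : 0 < ∑ μ : Fin n, ∑ ν : Fin n,
        c μ * (starRingEnd ℂ) (c ν) * projKer K v1 (x μ) (x ν) :=
      hKproj v1 hv1z n x hx c hc0
    have h2 : 0 ≤ T * (∑ μ : Fin n, ∑ ν : Fin n,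
        c μ * (starRingEnd ℂ) (c ν) * k (x μ) (x ν)) :=
      mul_nonneg hT_nonneg (spdKer_sum_nonneg hkspd n x hx c)
    exact add_pos_of_pos_of_nonneg h1 h2

lemma blockK_restrict {X : Type*} {m ℓ : ℕ} (hm : m ≤ ℓ)
    (K : X → X → Matrix (Fin m) (Fin m) ℂ) (k : X → X → ℂ)
    (h : IsSPDMat (blockK hm K k)) : IsSPDMat K := by
  intro n x hx v hv
  set w : Fin n → Fin ℓ → ℂ :=
    fun μ i => if hi : (i : ℕ) < m then v μ ⟨(i : ℕ), hi⟩ else 0 with hwdef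
  have hwcomp : ∀ μ, w μ ∘ Fin.castLE hm = v μ := by
    intro μ; funext j
    simp [hwdef, Fin.castLE, j.2]
  have hwtail : ∀ μ ν : Fin n,
      (∑ i ∈ Finset.univ.filter (fun i : Fin ℓ => ¬ (i : ℕ) < m),
        w μ i * (starRingEnd ℂ) (w ν i)) = 0 := by
    intro μ ν
    apply Finset.sum_eq_zero
    intro i hi
    simp only [Finset.mem_filter] at hi
    simp [hwdef, hi.2]
  have hwne : ∃ μ, w μ ≠ 0 := by
    obtain ⟨μ0, hμ0⟩ := hv
    obtain ⟨j, hj⟩ : ∃ j, v μ0 j ≠ 0 := by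
      by_contra h'; push_neg at h'; exact hμ0 (funext h')
    refine ⟨μ0, fun h0 => hj ?_⟩
    have := congrFun h0 (Fin.castLE hm j)
    rw [← hwcomp μ0]
    exact this
  have key := h n x hx w hwne
  refine lt_of_lt_of_eq key (Finset.sum_congr rfl fun μ _ => Finset.sum_congr rfl fun ν _ => ?_)
  rw [blockK_key hm K k (x μ) (x ν) (w μ) (w ν), hwtail μ ν, mul_zero, add_zero,
    hwcomp μ, hwcomp ν]

end Helpers

/-- Let `(S,*)` be a semigroup of continuous functions with an involution and
suppose `P^{+,*}(X,S)` is nonempty.  Then `P^{+,*}_proj(X,S,ℂ^ℓ) = P^{+,*}(X,S,ℂ^ℓ)` for a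
given `ℓ ≥ 2` if and only if it holds for every `m` with `2 ≤ m ≤ ℓ`. -/
theorem stmt_11 {X : Type*} [TopologicalSpace X]
    (S : Set (X → X))
    (hScont : ∀ ψ ∈ S, Continuous ψ)
    (hScomp : ∀ φ ∈ S, ∀ ψ ∈ S, φ ∘ ψ ∈ S)
    (st : (X → X) → (X → X))
    (hstS : ∀ φ ∈ S, st φ ∈ S)
    (hstinv : ∀ φ ∈ S, st (st φ) = φ)
    (hne : ∃ k : X → X → ℂ,
      (Continuous fun p : X × X => k p.1 p.2) ∧
      (∀ φ ∈ S, ∀ x y : X, k x (φ y) = k (st φ x) y) ∧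
      IsSPDKer k)
    (ℓ : ℕ) (hℓ : 2 ≤ ℓ) :
    PstarPlusProjMat S st ℓ = PstarPlusMat S st ℓ ↔
      ∀ m : ℕ, 2 ≤ m → m ≤ ℓ → PstarPlusProjMat S st m = PstarPlusMat S st m := by
  constructor
  · intro hEq m h2m hmℓ
    obtain ⟨k, hkc, hkin, hkspd⟩ := hne
    apply Set.Subset.antisymm
    · rintro K ⟨hKc, hKin, hKproj⟩
      have hcont : Continuous fun p : X × X => blockK hmℓ K k p.1 p.2 := by
        apply continuous_pi; intro i
        apply continuous_pi; intro j
        show Continuous fun p : X × X => blockK hmℓ K k p.1 p.2 i j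
        simp only [blockK_apply]
        split_ifs with h1 h2 h3 h4
        exacts [hKc.matrix_elem _ _, continuous_const, continuous_const, hkc, continuous_const]
      have hinv : ∀ φ ∈ S, ∀ x y : X, blockK hmℓ K k x (φ y) = blockK hmℓ K k (st φ x) y := by
        intro φ hφ x y
        funext i j
        simp only [blockK_apply]
        split_ifs with h1 h2 h3 h4
        exacts [by rw [hKin φ hφ x y], rfl, rfl, by rw [hkin φ hφ x y], rfl]
      have hblk : blockK hmℓ K k ∈ PstarPlusProjMat S st ℓ :=
        ⟨hcont, hinv, blockK_proj_spd hmℓ K k hkspd hKproj⟩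
      rw [hEq] at hblk
      exact ⟨hKc, hKin, blockK_restrict hmℓ K k hblk.2.2⟩
    · exact mat_subset_proj S st m
  · intro h
    exact h ℓ hℓ le_rfl
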